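/- arXiv:1411.2673 — 2 statements merged into one kernel-verified Lean document; each statement's English description precedes it below -/
import Mathlib

section
/- Any minimizer γ of E(γ) = ∫ d(x, Γ_γ)^p dμ(x) + λ·L(γ) over 1-Lipschitz curves has image contained in the convex hull of the support of μ. -/
open Metric Set MeasureTheory

/-- The support of a measure: points all of whose neighborhoods have positive measure. -/
def msupport {d : ℕ} (μ : Measure (EuclideanSpace ℝ (Fin d))) : Set (EuclideanSpace ℝ (Fin d)) :=
  {x | ∀ r > 0, 0 < μ (Metric.ball x r)}

/-- The average-distance energy of a curve `γ : [0,a] → ℝ^d`. -/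
noncomputable def curveEnergy {d : ℕ} (μ : Measure (EuclideanSpace ℝ (Fin d)))
    (p lam a : ℝ) (γ : ℝ → EuclideanSpace ℝ (Fin d)) : ℝ :=
  (∫ x, Metric.infDist x (γ '' Set.Icc 0 a) ^ p ∂μ)
    + lam * (eVariationOn γ (Set.Icc 0 a)).toReal

/-!
Let `K` be the convex hull of the support of `μ`; it is compact by Carathéodory's theorem, so the
nearest-point projection `P` onto `K` exists, and the obtuse-angle inequalities characterizing it
give `|P z - P w|² + (d(z, K) - d(w, K))² ≤ |z - w|²`. Hence `P ∘ γ` is again admissible, and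
neither its distance term (a point of `K` is at least as close to `P z` as to `z`) nor its length
exceeds that of `γ`. If `γ` leaves `K`, one of them drops strictly: when `t ↦ d(γ t, K)` is
constant, it is positive and every point of `K` gets strictly closer to the curve; otherwise,
summing the inequality along partitions and applying Minkowski's inequality shows that the length
strictly drops on a subinterval over which `d(γ ·, K)` changes.
-/

open scoped RealInnerProductSpace

section ConvexHull

variable {𝕜 E : Type*} [Field 𝕜] [LinearOrder 𝕜] [IsStrictOrderedRing 𝕜] [AddCommGroup E]
  [Module 𝕜 E] [FiniteDimensional 𝕜 E]

theorem convexHull_eq_image_stdSimplex_prod_pi {s : Set E} (hs : s.Nonempty) :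
    convexHull 𝕜 s = (fun q : (Fin (Module.finrank 𝕜 E + 1) → 𝕜) × (Fin _ → E) =>
      ∑ i, q.1 i • q.2 i) '' (stdSimplex 𝕜 _ ×ˢ univ.pi fun _ => s) := by
  refine Subset.antisymm (fun x hx => ?_) ?_
  · obtain ⟨z₀, hz₀⟩ := hs
    obtain ⟨ι, _, z, w, hzs, hai, hw0, hw1, rfl⟩ := eq_pos_convex_span_of_mem_convexHull hx
    -- Carathéodory: at most `finrank + 1` points are needed; pad with zero weights
    obtain ⟨e⟩ : Nonempty (ι ↪ Fin (Module.finrank 𝕜 E + 1)) :=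
      Function.Embedding.nonempty_of_card_le
        (hai.card_le_finrank_succ.trans (by simpa using Submodule.finrank_le _))
    set W := Function.extend e w 0
    set Z := Function.extend e z fun _ => z₀
    have hW : ∀ j ∉ range e, W j = 0 := fun j hj => Function.extend_apply' _ _ _ hj
    have hZ : ∀ j ∉ range e, Z j = z₀ := fun j hj => Function.extend_apply' _ _ _ hj
    have hWe : ∀ i, W (e i) = w i := e.injective.extend_apply _ _
    have hZe : ∀ i, Z (e i) = z i := e.injective.extend_apply _ _
    refine ⟨(W, Z), ⟨⟨fun j => ?_, ?_⟩, fun j _ => ?_⟩, ?_⟩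
    · by_cases hj : j ∈ range e
      · obtain ⟨i, rfl⟩ := hj
        exact (hw0 i).le.trans_eq (hWe i).symm
      · exact (hW j hj).ge
    · rw [← hw1]
      exact (Fintype.sum_of_injective e e.injective w W hW fun i => (hWe i).symm).symm
    · by_cases hj : j ∈ range e
      · obtain ⟨i, rfl⟩ := hj
        exact mem_of_eq_of_mem (hZe i) (hzs (mem_range_self i))
      · exact mem_of_eq_of_mem (hZ j hj) hz₀
    · refine (Fintype.sum_of_injective e e.injective _ _ (fun j hj => ?_) fun i => ?_).symm
      · simp [hW j hj]
      · simp [hWe, hZe]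
  · rintro _ ⟨⟨w, z⟩, ⟨hw, hz⟩, rfl⟩
    exact (convex_convexHull 𝕜 s).sum_mem (fun i _ => hw.1 i) hw.2
      fun i _ => subset_convexHull 𝕜 s (hz i trivial)

end ConvexHull

theorem isCompact_convexHull {E : Type*} [NormedAddCommGroup E] [NormedSpace ℝ E]
    [FiniteDimensional ℝ E] {s : Set E} (hs : IsCompact s) : IsCompact (convexHull ℝ s) := by
  obtain rfl | hne := s.eq_empty_or_nonempty
  · simp
  rw [convexHull_eq_image_stdSimplex_prod_pi hne]
  exact ((isCompact_stdSimplex ℝ _).prod (isCompact_univ_pi fun _ => hs)).image (by fun_prop)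

section Projection

variable {F : Type*} [NormedAddCommGroup F] [InnerProductSpace ℝ F]

theorem norm_sub_sq_add_sq_le_of_inner_nonpos {z w pz pw : F} (hz : ⟪z - pz, pw - pz⟫ ≤ 0)
    (hw : ⟪w - pw, pz - pw⟫ ≤ 0) :
    ‖pz - pw‖ ^ 2 + (‖z - pz‖ - ‖w - pw‖) ^ 2 ≤ ‖z - w‖ ^ 2 := by
  have hcross : 0 ≤ ⟪pz - pw, (z - pz) - (w - pw)⟫ := by
    have : ⟪pz - pw, (z - pz) - (w - pw)⟫ = -⟪z - pz, pw - pz⟫ - ⟪w - pw, pz - pw⟫ := by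
      simp only [inner_sub_left, inner_sub_right, real_inner_comm]
      ring
    linarith
  have hnorm : (‖z - pz‖ - ‖w - pw‖) ^ 2 ≤ ‖(z - pz) - (w - pw)‖ ^ 2 :=
    sq_le_sq' (abs_le.1 (abs_norm_sub_norm_le _ _)).1 (abs_le.1 (abs_norm_sub_norm_le _ _)).2
  calc ‖pz - pw‖ ^ 2 + (‖z - pz‖ - ‖w - pw‖) ^ 2
      ≤ ‖pz - pw‖ ^ 2 + 2 * ⟪pz - pw, (z - pz) - (w - pw)⟫ + ‖(z - pz) - (w - pw)‖ ^ 2 := by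
        linarith
    _ = ‖z - w‖ ^ 2 := by rw [← norm_add_sq_real]; congr 2; abel

theorem exists_proj_dist_sq_add_sq_infDist_le {K : Set F} (hK : Convex ℝ K) (hKc : IsComplete K)
    (hne : K.Nonempty) :
    ∃ P : F → F, (∀ z, dist z (P z) = infDist z K) ∧
      ∀ z w, dist (P z) (P w) ^ 2 + (infDist z K - infDist w K) ^ 2 ≤ dist z w ^ 2 := by
  choose P hPK hPmin using exists_norm_eq_iInf_of_complete_convex hne hKc hK
  have hdist : ∀ z, dist z (P z) = infDist z K := fun z => by
    simp only [dist_eq_norm, hPmin, infDist_eq_iInf]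
  have hinner z := (norm_eq_iInf_iff_real_inner_le_zero hK (hPK z)).1 (hPmin z)
  refine ⟨P, hdist, fun z w => ?_⟩
  simpa only [← hdist, dist_eq_norm] using
    norm_sub_sq_add_sq_le_of_inner_nonpos (hinner z _ (hPK w)) (hinner w _ (hPK z))

end Projection

section Retraction

variable {X : Type*} [MetricSpace X] {K : Set X} {P : X → X}

theorem lipschitzWith_proj
    (hP : ∀ z w, dist (P z) (P w) ^ 2 + (infDist z K - infDist w K) ^ 2 ≤ dist z w ^ 2) :
    LipschitzWith 1 P :=
  LipschitzWith.of_dist_le_mul fun z w => by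
    rw [NNReal.coe_one, one_mul, ← pow_le_pow_iff_left₀ dist_nonneg dist_nonneg two_ne_zero]
    nlinarith [hP z w]

theorem dist_proj_sq_add_infDist_sq_le (hPdist : ∀ z, dist z (P z) = infDist z K)
    (hP : ∀ z w, dist (P z) (P w) ^ 2 + (infDist z K - infDist w K) ^ 2 ≤ dist z w ^ 2)
    {x : X} (hx : x ∈ K) (z : X) : dist x (P z) ^ 2 + infDist z K ^ 2 ≤ dist x z ^ 2 := by
  have hPx : P x = x := (dist_eq_zero.1 ((hPdist x).trans (infDist_zero_of_mem hx))).symm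
  simpa [hPx, infDist_zero_of_mem hx, dist_comm] using hP x z

theorem dist_proj_le (hPdist : ∀ z, dist z (P z) = infDist z K)
    (hP : ∀ z w, dist (P z) (P w) ^ 2 + (infDist z K - infDist w K) ^ 2 ≤ dist z w ^ 2)
    {x : X} (hx : x ∈ K) (z : X) : dist x (P z) ≤ dist x z :=
  (pow_le_pow_iff_left₀ dist_nonneg dist_nonneg two_ne_zero).1
    (by nlinarith [dist_proj_sq_add_infDist_sq_le hPdist hP hx z])

theorem dist_proj_lt (hPdist : ∀ z, dist z (P z) = infDist z K)
    (hP : ∀ z w, dist (P z) (P w) ^ 2 + (infDist z K - infDist w K) ^ 2 ≤ dist z w ^ 2)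
    {x z : X} (hx : x ∈ K) (hz : 0 < infDist z K) : dist x (P z) < dist x z :=
  (pow_lt_pow_iff_left₀ dist_nonneg dist_nonneg two_ne_zero).1
    (by nlinarith [dist_proj_sq_add_infDist_sq_le hPdist hP hx z])

end Retraction

theorem sqrt_sum_sq_add_sum_sq_le {ι : Type*} (s : Finset ι) (A B : ι → ℝ) :
    √((∑ i ∈ s, A i) ^ 2 + (∑ i ∈ s, B i) ^ 2) ≤ ∑ i ∈ s, √(A i ^ 2 + B i ^ 2) := by
  simpa only [← Complex.norm_add_mul_I, Complex.ofReal_sum, Finset.sum_mul,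
    Finset.sum_add_distrib] using norm_sum_le s fun i => (A i : ℂ) + B i * Complex.I

section Variation

variable {α E F : Type*} [LinearOrder α]

theorem eVariationOn_Icc_add_add [PseudoEMetricSpace E] (f : α → E) {a s t b : α} (has : a ≤ s)
    (hst : s ≤ t) (htb : t ≤ b) :
    eVariationOn f (Icc a s) + eVariationOn f (Icc s t) + eVariationOn f (Icc t b) =
      eVariationOn f (Icc a b) := by
  have h₁ := eVariationOn.Icc_add_Icc f (s := univ) has (hst.trans htb) (mem_univ s)
  have h₂ := eVariationOn.Icc_add_Icc f (s := univ) hst htb (mem_univ t)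
  simp only [univ_inter] at h₁ h₂
  rw [add_assoc, h₂, h₁]

theorem exists_monotone_sum_edist_le_of_mem_Icc [PseudoEMetricSpace E] (f : α → E) {a b : α}
    (hab : a ≤ b) {u : ℕ → α} (hu : Monotone u) (us : ∀ i, u i ∈ Icc a b) (n : ℕ) :
    ∃ v : ℕ → α, ∃ m, Monotone v ∧ (∀ i, v i ∈ Icc a b) ∧ v 0 = a ∧ v m = b ∧
      ∑ i ∈ Finset.range n, edist (f (u (i + 1))) (f (u i)) ≤
        ∑ i ∈ Finset.range m, edist (f (v (i + 1))) (f (v i)) := by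
  let v : ℕ → α := fun i => if i = 0 then a else if i ≤ n + 1 then u (i - 1) else b
  have hvu : ∀ i < n + 1, v (i + 1) = u i := fun i hi => by simp [v, Nat.succ_le_of_lt hi]
  refine ⟨v, n + 2, monotone_nat_of_le_succ fun i => ?_, fun i => ?_, rfl, by simp [v], ?_⟩
  · simp only [v]
    split_ifs <;> grind [Monotone]
  · simp only [v]
    split_ifs
    exacts [left_mem_Icc.2 hab, us _, right_mem_Icc.2 hab]
  set D : ℕ → ENNReal := fun i => edist (f (v (i + 1))) (f (v i))
  calc ∑ i ∈ Finset.range n, edist (f (u (i + 1))) (f (u i))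
      = ∑ i ∈ Finset.range n, D (i + 1) := Finset.sum_congr rfl fun i hi => by
        rw [Finset.mem_range] at hi
        simp only [D, hvu i (by omega), hvu (i + 1) (by omega)]
    _ ≤ ∑ i ∈ Finset.range (n + 1), D (i + 1) :=
        Finset.sum_le_sum_of_subset (Finset.range_subset_range.2 n.le_succ)
    _ ≤ ∑ i ∈ Finset.range (n + 2), D i := by
        rw [Finset.sum_range_succ' D]
        exact le_self_add

variable [PseudoMetricSpace E] [PseudoMetricSpace F]

theorem eVariationOn_le_of_dist_le {f : α → E} {G : α → F} {s : Set α}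
    (h : ∀ x ∈ s, ∀ y ∈ s, dist (f x) (f y) ≤ dist (G x) (G y)) :
    eVariationOn f s ≤ eVariationOn G s :=
  iSup_mono fun ⟨_, _, _, us⟩ => Finset.sum_le_sum fun _ _ => by
    simpa only [edist_dist] using ENNReal.ofReal_le_ofReal (h _ (us _) _ (us _))

theorem sum_dist_le_toReal_eVariationOn {f : α → E} {s : Set α} (hf : eVariationOn f s ≠ ⊤)
    {u : ℕ → α} (hu : Monotone u) (us : ∀ i, u i ∈ s) (n : ℕ) :
    ∑ i ∈ Finset.range n, dist (f (u (i + 1))) (f (u i)) ≤ (eVariationOn f s).toReal := by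
  rw [← ENNReal.ofReal_le_iff_le_toReal hf, ENNReal.ofReal_sum_of_nonneg fun _ _ => dist_nonneg]
  simpa only [← edist_dist] using eVariationOn.sum_le hu us

theorem eVariationOn_Icc_le_ofReal_sqrt {f : α → E} {h : α → ℝ} {G : α → F} {a b : α}
    (hab : a ≤ b) (hG : eVariationOn G (Icc a b) ≠ ⊤)
    (hfG : ∀ x ∈ Icc a b, ∀ y ∈ Icc a b,
      dist (f x) (f y) ^ 2 + (h x - h y) ^ 2 ≤ dist (G x) (G y) ^ 2) :
    eVariationOn f (Icc a b) ≤
      ENNReal.ofReal √((eVariationOn G (Icc a b)).toReal ^ 2 - (h b - h a) ^ 2) := by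
  set V := (eVariationOn G (Icc a b)).toReal
  refine iSup_le fun ⟨n, u, hu, us⟩ => ?_
  obtain ⟨v, m, hv, hvs, hv0, hvm, hsum⟩ :=
    exists_monotone_sum_edist_le_of_mem_Icc f hab hu us n
  set A : ℕ → ℝ := fun i => dist (f (v (i + 1))) (f (v i))
  have hB : ∑ i ∈ Finset.range m, (h (v (i + 1)) - h (v i)) = h b - h a := by
    rw [Finset.sum_range_sub (fun i => h (v i)), hvm, hv0]
  have hAB : √((∑ i ∈ Finset.range m, A i) ^ 2 + (h b - h a) ^ 2) ≤ V :=
    calc √((∑ i ∈ Finset.range m, A i) ^ 2 + (h b - h a) ^ 2)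
        ≤ ∑ i ∈ Finset.range m, √(A i ^ 2 + (h (v (i + 1)) - h (v i)) ^ 2) :=
          hB ▸ sqrt_sum_sq_add_sum_sq_le _ _ _
      _ ≤ ∑ i ∈ Finset.range m, dist (G (v (i + 1))) (G (v i)) :=
          Finset.sum_le_sum fun i _ => Real.sqrt_le_iff.2 ⟨dist_nonneg, hfG _ (hvs _) _ (hvs _)⟩
      _ ≤ V := sum_dist_le_toReal_eVariationOn hG hv hvs m
  refine hsum.trans ?_
  simp only [edist_dist]
  rw [← ENNReal.ofReal_sum_of_nonneg fun _ _ => dist_nonneg]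
  exact ENNReal.ofReal_le_ofReal
    (Real.le_sqrt_of_sq_le (by linarith [(Real.sqrt_le_iff.1 hAB).2]))

theorem eVariationOn_Icc_lt_of_ne {f : α → E} {h : α → ℝ} {G : α → F} {a b : α}
    (hab : a ≤ b) (hG : eVariationOn G (Icc a b) ≠ ⊤)
    (hfG : ∀ x ∈ Icc a b, ∀ y ∈ Icc a b,
      dist (f x) (f y) ^ 2 + (h x - h y) ^ 2 ≤ dist (G x) (G y) ^ 2)
    (hne : h a ≠ h b) : eVariationOn f (Icc a b) < eVariationOn G (Icc a b) := by
  set V := (eVariationOn G (Icc a b)).toReal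
  have hD : 0 < (h b - h a) ^ 2 := sq_pos_of_ne_zero (sub_ne_zero.2 hne.symm)
  have hGba : dist (G b) (G a) ≤ V := by
    rw [dist_edist]
    exact ENNReal.toReal_mono hG
      (eVariationOn.edist_le G (right_mem_Icc.2 hab) (left_mem_Icc.2 hab))
  have hDV : (h b - h a) ^ 2 ≤ V ^ 2 := by
    nlinarith [hfG b (right_mem_Icc.2 hab) a (left_mem_Icc.2 hab),
      pow_le_pow_left₀ dist_nonneg hGba 2, sq_nonneg (dist (f b) (f a))]
  have hV : 0 < V := lt_of_pow_lt_pow_left₀ 2 ENNReal.toReal_nonneg (by simpa using hD.trans_le hDV)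
  calc eVariationOn f (Icc a b) ≤ ENNReal.ofReal √(V ^ 2 - (h b - h a) ^ 2) :=
        eVariationOn_Icc_le_ofReal_sqrt hab hG hfG
    _ < ENNReal.ofReal V := (ENNReal.ofReal_lt_ofReal_iff hV).2 ((Real.sqrt_lt' hV).2 (by linarith))
    _ = eVariationOn G (Icc a b) := ENNReal.ofReal_toReal hG

theorem eVariationOn_Icc_lt_of_ne_of_mem {f : α → E} {h : α → ℝ} {G : α → F} {a b s t : α}
    (hs : s ∈ Icc a b) (ht : t ∈ Icc a b) (hG : eVariationOn G (Icc a b) ≠ ⊤)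
    (hfG : ∀ x ∈ Icc a b, ∀ y ∈ Icc a b,
      dist (f x) (f y) ^ 2 + (h x - h y) ^ 2 ≤ dist (G x) (G y) ^ 2)
    (hne : h s ≠ h t) : eVariationOn f (Icc a b) < eVariationOn G (Icc a b) := by
  wlog hst : s ≤ t generalizing s t
  · exact this ht hs hne.symm (le_of_not_ge hst)
  have hsub {x y : α} (hx : a ≤ x) (hy : y ≤ b) : Icc x y ⊆ Icc a b := Icc_subset_Icc hx hy
  have hle {x y : α} (hx : a ≤ x) (hy : y ≤ b) :
      eVariationOn f (Icc x y) ≤ eVariationOn G (Icc x y) :=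
    eVariationOn_le_of_dist_le fun u hu v hv => by
      have := hfG u (hsub hx hy hu) v (hsub hx hy hv)
      exact (pow_le_pow_iff_left₀ dist_nonneg dist_nonneg two_ne_zero).1 (by nlinarith)
  have hfin {x y : α} (hx : a ≤ x) (hy : y ≤ b) : eVariationOn G (Icc x y) ≠ ⊤ :=
    ne_top_of_le_ne_top hG (eVariationOn.mono G (hsub hx hy))
  have hmid := eVariationOn_Icc_lt_of_ne (f := f) hst (hfin hs.1 ht.2)
    (fun x hx y hy => hfG x (hsub hs.1 ht.2 hx) y (hsub hs.1 ht.2 hy)) hne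
  rw [← eVariationOn_Icc_add_add f hs.1 hst ht.2, ← eVariationOn_Icc_add_add G hs.1 hst ht.2]
  refine ENNReal.add_lt_add_of_lt_of_le (ne_top_of_le_ne_top (hfin ht.1 le_rfl) (hle ht.1 le_rfl))
    (ENNReal.add_lt_add_of_le_of_lt (ne_top_of_le_ne_top (hfin le_rfl hs.2) (hle le_rfl hs.2))
      (hle le_rfl hs.2) hmid) (hle ht.1 le_rfl)

end Variation

section InfDist

variable {X : Type*} [PseudoMetricSpace X] {x : X} {S : Set X} {P : X → X}

theorem infDist_image_le_of_dist_le (h : ∀ z ∈ S, dist x (P z) ≤ dist x z) :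
    infDist x (P '' S) ≤ infDist x S := by
  rcases S.eq_empty_or_nonempty with rfl | hne
  · simp
  exact (le_infDist hne).2 fun z hz =>
    (infDist_le_dist_of_mem (mem_image_of_mem P hz)).trans (h z hz)

theorem infDist_image_lt_of_dist_lt (hS : IsCompact S) (hne : S.Nonempty)
    (h : ∀ z ∈ S, dist x (P z) < dist x z) : infDist x (P '' S) < infDist x S := by
  obtain ⟨z, hz, hzx⟩ := hS.exists_infDist_eq_dist hne x
  rw [hzx]
  exact (infDist_le_dist_of_mem (mem_image_of_mem P hz)).trans_lt (h z hz)

end InfDist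

section Integral

variable {X : Type*} [MeasurableSpace X] {μ : Measure X}

theorem integral_lt_integral_of_ae_lt [NeZero μ] {f g : X → ℝ} (hf : Integrable f μ)
    (hg : Integrable g μ) (hfg : ∀ᵐ x ∂μ, f x < g x) : ∫ x, f x ∂μ < ∫ x, g x ∂μ := by
  rw [← sub_pos, ← integral_sub hg hf]
  refine (integral_pos_iff_support_of_nonneg_ae (hfg.mono fun x hx => (sub_pos.2 hx).le)
    (hg.sub hf)).2 ?_
  exact (Measure.measure_univ_pos.2 (NeZero.ne μ)).trans_le
    (measure_mono_ae (hfg.mono fun x hx _ => (sub_pos.2 hx).ne'))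

variable [MetricSpace X] [OpensMeasurableSpace X] [IsFiniteMeasureOnCompacts μ] {s S : Set X}
  {P : X → X} {p : ℝ}

theorem integrable_infDist_rpow (hs : IsCompact s) (hμs : ∀ᵐ x ∂μ, x ∈ s) (hp : 0 ≤ p)
    (S : Set X) : Integrable (fun x => infDist x S ^ p) μ := by
  have := ((continuous_infDist_pt S).rpow_const fun _ => Or.inr hp).continuousOn
    |>.integrableOn_compact (μ := μ) hs
  rwa [IntegrableOn, Measure.restrict_eq_self_of_ae_mem hμs] at this

theorem integral_infDist_rpow_image_le (hs : IsCompact s) (hμs : ∀ᵐ x ∂μ, x ∈ s) (hp : 0 ≤ p)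
    (hP : ∀ x ∈ s, ∀ z ∈ S, dist x (P z) ≤ dist x z) :
    ∫ x, infDist x (P '' S) ^ p ∂μ ≤ ∫ x, infDist x S ^ p ∂μ :=
  integral_mono_ae (integrable_infDist_rpow hs hμs hp _) (integrable_infDist_rpow hs hμs hp _)
    (hμs.mono fun x hx =>
      Real.rpow_le_rpow infDist_nonneg (infDist_image_le_of_dist_le (hP x hx)) hp)

theorem integral_infDist_rpow_image_lt [NeZero μ] (hs : IsCompact s) (hμs : ∀ᵐ x ∂μ, x ∈ s)
    (hp : 0 < p) (hS : IsCompact S) (hSne : S.Nonempty)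
    (hP : ∀ x ∈ s, ∀ z ∈ S, dist x (P z) < dist x z) :
    ∫ x, infDist x (P '' S) ^ p ∂μ < ∫ x, infDist x S ^ p ∂μ :=
  integral_lt_integral_of_ae_lt (integrable_infDist_rpow hs hμs hp.le _)
    (integrable_infDist_rpow hs hμs hp.le _) (hμs.mono fun x hx =>
      Real.rpow_lt_rpow infDist_nonneg (infDist_image_lt_of_dist_lt hS hSne (hP x hx)) hp)

end Integral

theorem curveEnergy_comp_lt {d : ℕ} {μ : Measure (EuclideanSpace ℝ (Fin d))} {p lam a : ℝ}
    {γ : ℝ → EuclideanSpace ℝ (Fin d)} {P : EuclideanSpace ℝ (Fin d) → EuclideanSpace ℝ (Fin d)}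
    (hlam : 0 < lam) (hγ : eVariationOn γ (Icc 0 a) ≠ ⊤)
    (hint : ∫ x, infDist x (P '' (γ '' Icc 0 a)) ^ p ∂μ ≤ ∫ x, infDist x (γ '' Icc 0 a) ^ p ∂μ)
    (hvar : eVariationOn (P ∘ γ) (Icc 0 a) ≤ eVariationOn γ (Icc 0 a))
    (hlt : ∫ x, infDist x (P '' (γ '' Icc 0 a)) ^ p ∂μ < ∫ x, infDist x (γ '' Icc 0 a) ^ p ∂μ ∨
      eVariationOn (P ∘ γ) (Icc 0 a) < eVariationOn γ (Icc 0 a)) :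
    curveEnergy μ p lam a (P ∘ γ) < curveEnergy μ p lam a γ := by
  rw [curveEnergy, curveEnergy, image_comp]
  rcases hlt with hlt | hlt
  · exact add_lt_add_of_lt_of_le hlt
      (mul_le_mul_of_nonneg_left (ENNReal.toReal_mono hγ hvar) hlam.le)
  · exact add_lt_add_of_le_of_lt hint
      (mul_lt_mul_of_pos_left (ENNReal.toReal_strict_mono hγ hlt) hlam)

/-- Any minimizer of the penalized average-distance functional has image contained in the
convex hull of the support of `μ`. -/
theorem minimizer_in_convex_hull {d : ℕ} (μ : Measure (EuclideanSpace ℝ (Fin d)))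
    [IsFiniteMeasure μ] (hpos : 0 < μ Set.univ)
    (hcpt : IsCompact (msupport μ)) (hfull : μ (msupport μ)ᶜ = 0)
    (p lam : ℝ) (hp : 1 ≤ p) (hlam : 0 < lam)
    (a : ℝ) (ha : 0 ≤ a) (γ : ℝ → EuclideanSpace ℝ (Fin d))
    (hlip : LipschitzOnWith 1 γ (Set.Icc 0 a))
    (hmin : ∀ b ψ, 0 ≤ b → LipschitzOnWith 1 ψ (Set.Icc 0 b) →
      curveEnergy μ p lam a γ ≤ curveEnergy μ p lam b ψ) :
    γ '' Set.Icc 0 a ⊆ convexHull ℝ (msupport μ) := by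
  rintro _ ⟨t₀, ht₀, rfl⟩
  by_contra hout
  set K := convexHull ℝ (msupport μ)
  have : NeZero μ := ⟨Measure.measure_univ_pos.1 hpos⟩
  have hμs : ∀ᵐ x ∂μ, x ∈ msupport μ := mem_ae_iff.2 hfull
  have hK : IsClosed K := (isCompact_convexHull hcpt).isClosed
  have hKne : K.Nonempty := convexHull_nonempty_iff.2 hμs.exists
  obtain ⟨P, hPdist, hP⟩ :=
    exists_proj_dist_sq_add_sq_infDist_le (convex_convexHull ℝ _) hK.isComplete hKne
  have hPlip := lipschitzWith_proj hP
  have hψ : LipschitzOnWith 1 (P ∘ γ) (Icc 0 a) := by simpa using hPlip.comp_lipschitzOnWith hlip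
  have hγ : eVariationOn γ (Icc 0 a) ≠ ⊤ := by
    have := hlip.locallyBoundedVariationOn 0 a (left_mem_Icc.2 ha) (right_mem_Icc.2 ha)
    rwa [inter_self] at this
  have hvar : eVariationOn (P ∘ γ) (Icc 0 a) ≤ eVariationOn γ (Icc 0 a) := by
    simpa using hPlip.lipschitzOnWith.comp_eVariationOn_le (mapsTo_univ γ (Icc 0 a))
  have hp0 : 0 < p := one_pos.trans_le hp
  have hint := integral_infDist_rpow_image_le (S := γ '' Icc 0 a) hcpt hμs hp0.le
    fun x hx z _ => dist_proj_le hPdist hP (subset_convexHull ℝ _ hx) z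
  refine (hmin a _ ha hψ).not_gt (curveEnergy_comp_lt hlam hγ hint hvar ?_)
  by_cases hconst : ∀ t ∈ Icc 0 a, infDist (γ t) K = infDist (γ t₀) K
  · have hD : 0 < infDist (γ t₀) K := (hK.notMem_iff_infDist_pos hKne).1 hout
    refine .inl (integral_infDist_rpow_image_lt hcpt hμs hp0
      (isCompact_Icc.image_of_continuousOn hlip.continuousOn) ⟨_, mem_image_of_mem γ ht₀⟩ ?_)
    rintro x hx _ ⟨t, ht, rfl⟩
    exact dist_proj_lt hPdist hP (subset_convexHull ℝ _ hx) (hconst t ht ▸ hD)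
  · simp only [not_forall] at hconst
    obtain ⟨t, ht, hne⟩ := hconst
    exact .inr (eVariationOn_Icc_lt_of_ne_of_mem (h := fun t => infDist (γ t) K) ht ht₀ hγ
      (fun x _ y _ => hP (γ x) (γ y)) hne)
end

section
/- If an arc-length parameterized curve γ : [0,L] → ℝ^2 has γ' of total variation less than 1/2 on an interval I = (t, t+δ) and γ'(t+) = e_1, then γ restricted to the closure of I is injective, and indeed the first coordinate γ_1 is strictly increasing on I with γ_1'(s) > 7/8 a.e. -/
/-!
On `I = (t, t + δ)` the tangent `g` oscillates by at most its total variation `V < 1/2`. The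
mean value inequality for Lipschitz curves (the fundamental theorem of calculus for absolutely
continuous functions, tested against a norming functional) keeps each chord `γ y - γ x` over
`[x, y] ⊆ closure I` within `V (y - x)` of `(y - x) • g s`, for any `s ∈ I`. Letting `y ↓ t` in
the chord from `t` puts every `g s` within `V` of the right tangent `e₁`; as `‖g s‖ = 1`, this
gives `g s 0 = 1 - ‖g s - e₁‖² / 2 ≥ 1 - V² / 2 > 7/8`, and every chord advances the first
coordinate by at least `(1 - V) (y - x) > 0`.
-/

open MeasureTheory Set
open scoped NNReal

theorem AbsolutelyContinuousOnInterval.image_sub_le_mul_sub_of_ae_deriv_le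
    {f f' : ℝ → ℝ} {a b C : ℝ} (hab : a ≤ b) (hf : AbsolutelyContinuousOnInterval f a b)
    (hf' : ∀ᵐ s ∂volume.restrict (Ioo a b), HasDerivAt f (f' s) s ∧ f' s ≤ C) :
    f b - f a ≤ C * (b - a) := by
  have hderiv : ∀ᵐ s ∂volume.restrict (Icc a b), deriv f s ≤ C := by
    rw [Measure.restrict_congr_set Ioo_ae_eq_Icc.symm]
    filter_upwards [hf'] with s ⟨hs, hle⟩
    exact hs.deriv ▸ hle
  calc f b - f a = ∫ s in a..b, deriv f s := hf.integral_deriv_eq_sub.symm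
    _ ≤ ∫ _ in a..b, C :=
      intervalIntegral.integral_mono_ae_restrict hab hf.intervalIntegrable_deriv
        intervalIntegrable_const hderiv
    _ = C * (b - a) := by rw [intervalIntegral.integral_const, smul_eq_mul, mul_comm]

section NormedSpace

variable {E : Type*} [NormedAddCommGroup E] [NormedSpace ℝ E]

theorem LipschitzOnWith.norm_image_sub_sub_smul_le {γ g : ℝ → E} {v : E} {K : ℝ≥0}
    {a b C : ℝ} (hab : a ≤ b) (hγ : LipschitzOnWith K γ (Icc a b))
    (hg : ∀ᵐ s ∂volume.restrict (Ioo a b), HasDerivAt γ (g s) s ∧ ‖g s - v‖ ≤ C) :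
    ‖γ b - γ a - (b - a) • v‖ ≤ C * (b - a) := by
  obtain ⟨ℓ, hℓ, hℓw⟩ := exists_dual_vector'' ℝ (γ b - γ a - (b - a) • v)
  have hac : AbsolutelyContinuousOnInterval (fun s => ℓ (γ s)) a b :=
    (ℓ.lipschitz.comp_lipschitzOnWith (uIcc_of_le hab ▸ hγ)).absolutelyContinuousOnInterval
  have hle := hac.image_sub_le_mul_sub_of_ae_deriv_le (C := ℓ v + C) hab <| by
    filter_upwards [hg] with s ⟨hs, hC⟩
    refine ⟨ℓ.hasFDerivAt.comp_hasDerivAt s hs, ?_⟩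
    calc ℓ (g s) = ℓ v + ℓ (g s - v) := by rw [map_sub]; ring
      _ ≤ ℓ v + C := by
        gcongr
        exact (le_abs_self _).trans <| (ℓ.le_opNorm _).trans <|
          (mul_le_of_le_one_left (norm_nonneg _) hℓ).trans hC
  have hnorm : ‖γ b - γ a - (b - a) • v‖ = ℓ (γ b) - ℓ (γ a) - (b - a) * ℓ v := by
    simpa using hℓw.symm
  linarith

theorem HasDerivWithinAt.norm_sub_le_of_norm_sub_sub_smul_le {γ : ℝ → E} {v w : E}
    {t u C : ℝ} (hγ : HasDerivWithinAt γ v (Ioi t) t) (htu : t < u)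
    (h : ∀ y ∈ Ioo t u, ‖γ y - γ t - (y - t) • w‖ ≤ C * (y - t)) :
    ‖v - w‖ ≤ C := by
  have hslope := hasDerivWithinAt_iff_tendsto_slope.1 hγ
  rw [sdiff_singleton_eq_self self_notMem_Ioi] at hslope
  rw [← dist_eq_norm, ← Metric.mem_closedBall]
  refine Metric.isClosed_closedBall.mem_of_tendsto hslope ?_
  filter_upwards [Ioo_mem_nhdsGT htu] with y hy
  have hyt : 0 < y - t := sub_pos.2 hy.1
  rw [Metric.mem_closedBall, dist_eq_norm, slope_def_module]
  calc ‖(y - t)⁻¹ • (γ y - γ t) - w‖ = (y - t)⁻¹ * ‖γ y - γ t - (y - t) • w‖ := by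
        rw [← norm_smul_of_nonneg (inv_nonneg.2 hyt.le), smul_sub _ (γ y - γ t), smul_smul,
          inv_mul_cancel₀ hyt.ne', one_smul]
    _ ≤ (y - t)⁻¹ * (C * (y - t)) := by gcongr; exact h y hy
    _ = C := by field_simp

theorem LipschitzOnWith.norm_sub_le_eVariationOn_of_hasDerivWithinAt_Ioi {γ g : ℝ → E} {v : E}
    {K : ℝ≥0} {a b : ℝ} (hγ : LipschitzOnWith K γ (Icc a b))
    (hg : ∀ᵐ s ∂volume.restrict (Ioo a b), HasDerivAt γ (g s) s)
    (hv : HasDerivWithinAt γ v (Ioi a) a) (hbv : BoundedVariationOn g (Ioo a b)) {s : ℝ}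
    (hs : s ∈ Ioo a b) : ‖g s - v‖ ≤ (eVariationOn g (Ioo a b)).toReal := by
  rw [norm_sub_rev]
  refine hv.norm_sub_le_of_norm_sub_sub_smul_le (hs.1.trans hs.2) fun y hy => ?_
  refine (hγ.mono (Icc_subset_Icc_right hy.2.le)).norm_image_sub_sub_smul_le (g := g) hy.1.le ?_
  filter_upwards [ae_restrict_of_ae_restrict_of_subset (Ioo_subset_Ioo_right hy.2.le) hg,
    ae_restrict_mem measurableSet_Ioo] with r hr hry
  exact ⟨hr, dist_eq_norm (g r) (g s) ▸ hbv.dist_le ⟨hry.1, hry.2.trans hy.2⟩ hs⟩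

end NormedSpace

theorem EuclideanSpace.lt_apply_of_norm_sub_single_lt {ι : Type*} [Fintype ι] [DecidableEq ι]
    {x : EuclideanSpace ℝ ι} {i : ι} {r : ℝ} (hx : ‖x‖ = 1)
    (h : ‖x - EuclideanSpace.single i 1‖ < r) : 1 - r ^ 2 / 2 < x i := by
  have hsq : ‖x - EuclideanSpace.single i 1‖ ^ 2 = 2 - 2 * x i := by
    rw [norm_sub_sq_real, hx, real_inner_comm, EuclideanSpace.inner_single_left, PiLp.norm_single]
    simp; ring
  nlinarith [norm_nonneg (x - EuclideanSpace.single i 1)]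

theorem LipschitzOnWith.strictMonoOn_apply_of_norm_sub_single_le {ι : Type*} [Fintype ι]
    [DecidableEq ι] {γ g : ℝ → EuclideanSpace ℝ ι} {i : ι} {K : ℝ≥0} {a b V : ℝ} (hV : V < 1)
    (hγ : LipschitzOnWith K γ (Icc a b))
    (hg : ∀ᵐ s ∂volume.restrict (Ioo a b),
      HasDerivAt γ (g s) s ∧ ‖g s - EuclideanSpace.single i 1‖ ≤ V) :
    StrictMonoOn (fun s => γ s i) (Icc a b) := by
  intro x hx y hy hxy
  have hchord := (hγ.mono (Icc_subset_Icc hx.1 hy.2)).norm_image_sub_sub_smul_le hxy.le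
    (ae_restrict_of_ae_restrict_of_subset (Ioo_subset_Ioo hx.1 hy.2) hg)
  have hi := (PiLp.norm_apply_le _ i).trans hchord
  simp only [PiLp.sub_apply, PiLp.smul_apply, PiLp.single_apply, if_true, smul_eq_mul, mul_one,
    Real.norm_eq_abs] at hi
  nlinarith [abs_le.1 hi]

theorem small_turning_injective_general {L t δ : ℝ} (ht : 0 ≤ t) (htδ : t + δ ≤ L)
    (γ g : ℝ → EuclideanSpace ℝ (Fin 2))
    (hlip : LipschitzOnWith 1 γ (Set.Icc 0 L))
    (hderiv : ∀ᵐ s ∂(volume.restrict (Set.Icc 0 L)), HasDerivAt γ (g s) s ∧ ‖g s‖ = 1)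
    (hright : HasDerivWithinAt γ (EuclideanSpace.single (0 : Fin 2) (1 : ℝ)) (Set.Ici t) t)
    (hTV : eVariationOn g (Set.Ioo t (t + δ)) < ENNReal.ofReal (1 / 2)) :
    Set.InjOn γ (Set.Icc t (t + δ)) ∧
    StrictMonoOn (fun s => γ s 0) (Set.Icc t (t + δ)) ∧
    (∀ᵐ s ∂(volume.restrict (Set.Ioo t (t + δ))), 7 / 8 < g s 0) := by
  set e₁ := EuclideanSpace.single (0 : Fin 2) (1 : ℝ)
  set V := (eVariationOn g (Ioo t (t + δ))).toReal
  have hV : V < 1 / 2 := ENNReal.toReal_lt_of_lt_ofReal hTV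
  have hlipI := hlip.mono (Icc_subset_Icc ht htδ)
  have hderivI : ∀ᵐ s ∂volume.restrict (Ioo t (t + δ)), HasDerivAt γ (g s) s ∧ ‖g s‖ = 1 :=
    ae_restrict_of_ae_restrict_of_subset (Ioo_subset_Icc_self.trans (Icc_subset_Icc ht htδ)) hderiv
  have hclose : ∀ s ∈ Ioo t (t + δ), ‖g s - e₁‖ ≤ V := fun s hs =>
    hlipI.norm_sub_le_eVariationOn_of_hasDerivWithinAt_Ioi (hderivI.mono fun _ h => h.1)
      (hright.mono Ioi_subset_Ici_self) (hTV.trans ENNReal.ofReal_lt_top).ne hs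
  have hcoord : ∀ᵐ s ∂volume.restrict (Ioo t (t + δ)), 7 / 8 < g s 0 := by
    filter_upwards [hderivI, ae_restrict_mem measurableSet_Ioo] with s hs hsI
    calc (7 / 8 : ℝ) = 1 - (1 / 2) ^ 2 / 2 := by norm_num
      _ < g s 0 := EuclideanSpace.lt_apply_of_norm_sub_single_lt hs.2 ((hclose s hsI).trans_lt hV)
  have hmono : StrictMonoOn (fun s => γ s 0) (Icc t (t + δ)) := by
    refine hlipI.strictMonoOn_apply_of_norm_sub_single_le (g := g) (by linarith) ?_
    filter_upwards [hderivI, ae_restrict_mem measurableSet_Ioo] with s hs hsI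
    exact ⟨hs.1, hclose s hsI⟩
  exact ⟨InjOn.of_comp (g := fun x : EuclideanSpace ℝ (Fin 2) => x 0) hmono.injOn, hmono, hcoord⟩

/-- If an arc-length-parameterized planar curve has tangent of total variation less
than `1/2` on `I = (t, t+δ)` and right derivative `e₁` at `t`, then `γ` is injective
on the closure of `I`; indeed the first coordinate of `γ` is strictly increasing there,
with a.e. derivative of first coordinate greater than `7/8` on `I`. -/
theorem small_turning_injective {L t δ : ℝ} (ht : 0 ≤ t) (hδ : 0 < δ) (htδ : t + δ ≤ L)
    (γ g : ℝ → EuclideanSpace ℝ (Fin 2))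
    (hlip : LipschitzOnWith 1 γ (Set.Icc 0 L))
    (hderiv : ∀ᵐ s ∂(volume.restrict (Set.Icc 0 L)), HasDerivAt γ (g s) s ∧ ‖g s‖ = 1)
    (hright : HasDerivWithinAt γ (EuclideanSpace.single (0 : Fin 2) (1 : ℝ)) (Set.Ici t) t)
    (hTV : eVariationOn g (Set.Ioo t (t + δ)) < ENNReal.ofReal (1 / 2)) :
    Set.InjOn γ (Set.Icc t (t + δ)) ∧
    StrictMonoOn (fun s => γ s 0) (Set.Icc t (t + δ)) ∧
    (∀ᵐ s ∂(volume.restrict (Set.Ioo t (t + δ))), 7 / 8 < g s 0) :=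
  small_turning_injective_general ht htδ γ g hlip hderiv hright hTV
end
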